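/- For 0 < α < 1, σ = 1 - α/2, T > 0, τ > 0 with Mτ = T, and 0 ≤ j ≤ M-1, the coefficient a_0^{j+1} := c_j^{(α,σ,j)}/(τ^α Γ(2-α)) satisfies a_0^{j+1} > 1/(2 T^α Γ(1-α)). In particular, for j ≥ 1, c_j^{(α,σ,j)} = a_j^{(α,σ)} - b_j^{(α,σ)} and the bound a_j^{(α,σ)} - b_j^{(α,σ)} > (1-α)/2 · (j+σ)^{-α} holds. -/
import Mathlib

open intervalIntegral MeasureTheory

noncomputable def aCoef (α σ : ℝ) : ℕ → ℝ
  | 0 => σ ^ (1 - α)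
  | (ℓ + 1) => ((ℓ : ℝ) + 1 + σ) ^ (1 - α) - ((ℓ : ℝ) + σ) ^ (1 - α)

/-- `b_ℓ^{(α,σ)}` for `ℓ ≥ 1` (the value at `ℓ = 0` is irrelevant, set to 0). -/
noncomputable def bCoef (α σ : ℝ) : ℕ → ℝ
  | 0 => 0
  | (ℓ + 1) => (((ℓ : ℝ) + 1 + σ) ^ (2 - α) - ((ℓ : ℝ) + σ) ^ (2 - α)) / (2 - α)
      - (((ℓ : ℝ) + 1 + σ) ^ (1 - α) + ((ℓ : ℝ) + σ) ^ (1 - α)) / 2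

/-- `c_j^{(α,σ,j)}`, the last (`m = j`) L2-1σ coefficient at level `j`. -/
noncomputable def cCoef (α σ : ℝ) : ℕ → ℝ
  | 0 => aCoef α σ 0
  | (j + 1) => aCoef α σ (j + 1) - bCoef α σ (j + 1)

lemma rpow_intable {s t r : ℝ} (hs : 0 < s) (hst : s ≤ t) :
    IntervalIntegrable (fun x : ℝ => x ^ r) volume s t :=
  intervalIntegrable_rpow (Or.inr (by
    rw [Set.uIcc_of_le hst]; intro h0
    exact absurd ((Set.mem_Icc.mp h0).1) (not_le.mpr hs)))

lemma key_ineq (α : ℝ) (hα : 0 < α) (hα' : α < 1) (s : ℝ) (hs : 0 < s) :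
    (1 - α) / 2 * (s + 1) ^ (-α) <
      (3/2) * (s+1) ^ (1-α) - (1/2) * s ^ (1-α) - ((s+1) ^ (2-α) - s ^ (2-α)) / (2-α) := by
  set t := s + 1 with ht_def
  have ht : 0 < t := by positivity
  have hst : s ≤ t := by rw [ht_def]; linarith
  have h1α : (0:ℝ) < 1 - α := by linarith
  have h2α : (0:ℝ) < 2 - α := by linarith
  -- integrability
  have hint1 : IntervalIntegrable (fun x : ℝ => (1-α) * x ^ (-α) * (x + (1/2 - s)))
      volume s t := by
    apply ContinuousOn.intervalIntegrable
    apply ContinuousOn.mul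
    · exact (continuousOn_const.mul (ContinuousOn.rpow_const continuousOn_id
        (fun x hx => Or.inl (by
          rw [Set.uIcc_of_le hst] at hx
          exact ne_of_gt (lt_of_lt_of_le hs hx.1)))))
    · exact (continuousOn_id.add continuousOn_const)
  have hint2 : IntervalIntegrable (fun x : ℝ => (1-α) * t ^ (-α) * (x + (1/2 - s)))
      volume s t := by
    apply ContinuousOn.intervalIntegrable
    exact continuousOn_const.mul (continuousOn_id.add continuousOn_const)
  -- the integral identity
  have hI : (∫ x in s..t, (1-α) * x ^ (-α) * (x + (1/2 - s))) =
      (3/2) * t ^ (1-α) - (1/2) * s ^ (1-α) - (t ^ (2-α) - s ^ (2-α)) / (2-α) := by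
    have hcongr : ∀ x ∈ Set.uIcc s t, (1-α) * x ^ (-α) * (x + (1/2 - s)) =
        (1-α) * x ^ (1-α) + ((1-α) * (1/2 - s)) * x ^ (-α) := by
      intro x hx
      rw [Set.uIcc_of_le hst] at hx
      have hx0 : 0 < x := lt_of_lt_of_le hs hx.1
      have : x ^ (-α) * x = x ^ (1-α) := by
        rw [show (1:ℝ) - α = -α + 1 by ring, Real.rpow_add hx0, Real.rpow_one]
      ring_nf
      nlinarith [this]
    rw [intervalIntegral.integral_congr hcongr]
    rw [intervalIntegral.integral_add
      ((rpow_intable hs hst).const_mul _) ((rpow_intable hs hst).const_mul _),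
      intervalIntegral.integral_const_mul, intervalIntegral.integral_const_mul,
      integral_rpow (Or.inl (by linarith)), integral_rpow (Or.inl (by linarith))]
    have e1 : (1:ℝ) - α + 1 = 2 - α := by ring
    have e2 : -α + 1 = 1 - α := by ring
    rw [e1, e2]
    have h2 : t ^ (2-α) = t * t ^ (1-α) := by
      rw [show (2:ℝ) - α = 1 + (1-α) by ring, Real.rpow_add ht, Real.rpow_one]
    have h2' : s ^ (2-α) = s * s ^ (1-α) := by
      rw [show (2:ℝ) - α = 1 + (1-α) by ring, Real.rpow_add hs, Real.rpow_one]
    rw [h2, h2', ht_def]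
    field_simp
    ring
  -- the lower bound
  have hmono : (∫ x in s..t, (1-α) * t ^ (-α) * (x + (1/2 - s))) ≤
      (∫ x in s..t, (1-α) * x ^ (-α) * (x + (1/2 - s))) := by
    apply intervalIntegral.integral_mono_on hst hint2 hint1
    intro x hx
    have hx0 : 0 < x := lt_of_lt_of_le hs hx.1
    have h1 : t ^ (-α) ≤ x ^ (-α) :=
      Real.rpow_le_rpow_of_nonpos hx0 hx.2 (by linarith)
    have h3 : (0:ℝ) ≤ x + (1/2 - s) := by
      have := hx.1; linarith
    have := mul_le_mul_of_nonneg_left h1 (le_of_lt h1α)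
    exact mul_le_mul_of_nonneg_right this h3
  have hval : (∫ x in s..t, (1-α) * t ^ (-α) * (x + (1/2 - s))) = (1-α) * t ^ (-α) := by
    rw [intervalIntegral.integral_const_mul, intervalIntegral.integral_add
      intervalIntegrable_id (intervalIntegrable_const), integral_id,
      intervalIntegral.integral_const, smul_eq_mul, ht_def]
    ring
  have htpos : 0 < (1-α) * t ^ (-α) := by positivity
  calc (1 - α) / 2 * t ^ (-α) < (1-α) * t ^ (-α) := by
        rw [div_mul_eq_mul_div]
        linarith [htpos]
    _ = (∫ x in s..t, (1-α) * t ^ (-α) * (x + (1/2 - s))) := hval.symm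
    _ ≤ _ := hmono
  |>.trans_eq hI

lemma part2_ineq (α : ℝ) (hα : 0 < α) (hα' : α < 1) (σ : ℝ) (hσ : σ = 1 - α / 2) :
    ∀ j : ℕ, 1 ≤ j →
      (1 - α) / 2 * ((j : ℝ) + σ) ^ (-α) < aCoef α σ j - bCoef α σ j := by
  intro j hj
  obtain ⟨ℓ, rfl⟩ : ∃ ℓ, j = ℓ + 1 := ⟨j - 1, by omega⟩
  have hσ0 : 0 < σ := by rw [hσ]; linarith
  have hs : 0 < (ℓ : ℝ) + σ := by positivity
  have key := key_ineq α hα hα' ((ℓ : ℝ) + σ) hs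
  have hc : (ℓ : ℝ) + σ + 1 = (ℓ : ℝ) + 1 + σ := by ring
  rw [hc] at key
  have hcast : ((ℓ + 1 : ℕ) : ℝ) + σ = (ℓ : ℝ) + 1 + σ := by push_cast; ring
  rw [hcast]
  show (1 - α) / 2 * ((ℓ : ℝ) + 1 + σ) ^ (-α) <
    (((ℓ : ℝ) + 1 + σ) ^ (1 - α) - ((ℓ : ℝ) + σ) ^ (1 - α)) -
      ((((ℓ : ℝ) + 1 + σ) ^ (2 - α) - ((ℓ : ℝ) + σ) ^ (2 - α)) / (2 - α)
        - ((((ℓ : ℝ) + 1 + σ) ^ (1 - α) + ((ℓ : ℝ) + σ) ^ (1 - α)) / 2))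
  linarith [key]

theorem stmt14 (α : ℝ) (hα : 0 < α) (hα' : α < 1) (σ : ℝ) (hσ : σ = 1 - α / 2)
    (T τ : ℝ) (hT : 0 < T) (hτ : 0 < τ) (M : ℕ) (hM : (M : ℝ) * τ = T) :
    (∀ j : ℕ, j ≤ M - 1 →
      1 / (2 * T ^ α * Real.Gamma (1 - α)) <
        cCoef α σ j / (τ ^ α * Real.Gamma (2 - α))) ∧
    (∀ j : ℕ, 1 ≤ j →
      (1 - α) / 2 * ((j : ℝ) + σ) ^ (-α) < aCoef α σ j - bCoef α σ j) := by
  have h1α : (0:ℝ) < 1 - α := by linarith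
  have hσ0 : 0 < σ := by rw [hσ]; linarith
  have hσ1 : σ < 1 := by rw [hσ]; linarith
  have hΓ1 : 0 < Real.Gamma (1 - α) := Real.Gamma_pos_of_pos h1α
  have hΓ2 : Real.Gamma (2 - α) = (1 - α) * Real.Gamma (1 - α) := by
    rw [show (2:ℝ) - α = (1 - α) + 1 by ring, Real.Gamma_add_one (ne_of_gt h1α)]
  have hM1 : 1 ≤ M := by
    rcases Nat.eq_zero_or_pos M with h | h
    · exfalso; rw [h] at hM; simp at hM; linarith
    · exact h
  have hMpos : (0:ℝ) < (M : ℝ) := by exact_mod_cast hM1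
  have hMα : (0:ℝ) < (M : ℝ) ^ α := Real.rpow_pos_of_pos hMpos α
  have hMα1 : (1:ℝ) ≤ (M : ℝ) ^ α := by
    calc (1:ℝ) = (1:ℝ) ^ α := (Real.one_rpow α).symm
      _ ≤ (M : ℝ) ^ α := Real.rpow_le_rpow (by norm_num) (by exact_mod_cast hM1) hα.le
  have hTα : T ^ α = (M : ℝ) ^ α * τ ^ α := by
    rw [← hM, Real.mul_rpow (Nat.cast_nonneg M) hτ.le]
  have hτα : (0:ℝ) < τ ^ α := Real.rpow_pos_of_pos hτ α
  have p2 := part2_ineq α hα hα' σ hσ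
  constructor
  · intro j hj
    -- reduce to (1-α) < 2 * cCoef * M^α
    have hcj : (1 - α) < 2 * cCoef α σ j * (M : ℝ) ^ α := by
      rcases Nat.eq_zero_or_pos j with rfl | hj1
      · -- j = 0 : cCoef = σ^(1-α) > σ ≥ 1/2
        have h0 : cCoef α σ 0 = σ ^ (1 - α) := rfl
        have hσσ : σ < σ ^ (1 - α) := by
          have := Real.rpow_lt_rpow_of_exponent_gt hσ0 hσ1 (show 1 - α < 1 by linarith)
          rwa [Real.rpow_one] at this
        have hσhalf : (1:ℝ)/2 ≤ σ := by rw [hσ]; linarith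
        have hpow0 : (0:ℝ) < σ ^ (1 - α) := Real.rpow_pos_of_pos hσ0 _
        rw [h0]
        nlinarith [mul_le_mul_of_nonneg_left hMα1 hpow0.le]
      · -- j ≥ 1
        have hcc : cCoef α σ j = aCoef α σ j - bCoef α σ j := by
          obtain ⟨ℓ, rfl⟩ : ∃ ℓ, j = ℓ + 1 := ⟨j - 1, by omega⟩
          rfl
        have hjM : (j : ℝ) + σ ≤ (M : ℝ) := by
          have : j + 1 ≤ M := by omega
          have : (j : ℝ) + 1 ≤ (M : ℝ) := by exact_mod_cast this
          linarith
        have hjσ : (0:ℝ) < (j : ℝ) + σ := by positivity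
        have hmono : ((M : ℝ)) ^ (-α) ≤ ((j : ℝ) + σ) ^ (-α) :=
          Real.rpow_le_rpow_of_nonpos hjσ hjM (by linarith)
        have hlt : (1 - α) / 2 * ((M : ℝ)) ^ (-α) < cCoef α σ j := by
          rw [hcc]
          calc (1 - α) / 2 * ((M : ℝ)) ^ (-α) ≤ (1 - α) / 2 * ((j : ℝ) + σ) ^ (-α) :=
                mul_le_mul_of_nonneg_left hmono (by linarith)
            _ < _ := p2 j hj1
        rw [Real.rpow_neg hMpos.le] at hlt
        have := mul_lt_mul_of_pos_right hlt (mul_pos two_pos hMα)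
        have hinv : ((M : ℝ) ^ α)⁻¹ * ((M : ℝ) ^ α) = 1 := inv_mul_cancel₀ (ne_of_gt hMα)
        nlinarith [this, hinv]
    have hd1 : (0:ℝ) < 2 * T ^ α * Real.Gamma (1 - α) := by
      have : (0:ℝ) < T ^ α := Real.rpow_pos_of_pos hT α
      positivity
    have hd2 : (0:ℝ) < τ ^ α * Real.Gamma (2 - α) := by
      rw [hΓ2]; positivity
    rw [div_lt_div_iff₀ hd1 hd2, hΓ2, hTα]
    nlinarith [mul_pos hτα hΓ1, mul_lt_mul_of_pos_right hcj (mul_pos hτα hΓ1)]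
  · exact p2
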